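/- arXiv:1407.3968 — 2 statements merged into one kernel-verified Lean document; each statement's English description precedes it below -/
import Mathlib

section
/- Let μ, μ₀ ∈ ℝ, ω², ω₀² > 0, U ∈ ℝ, V ≥ 0. Then (1/2)·log((1+ω²V)/(1+ω₀²V)) + (1/2)·(ω₀²-ω²)U²/((1+ω²V)(1+ω₀²V)) + μ²V/(2(1+ω²V)) - μU/(1+ω²V) - μ₀²V/(2(1+ω₀²V)) + μ₀U/(1+ω₀²V) ≥ -(1/2)·(log(1+ω²/ω₀²) + |ω²-ω₀²|/ω²) - (1/2)·|ω₀²-ω²|·(U/(1+ω₀²V))²·(1+ω₀²/ω²) - |μ|·|U/(1+ω₀²V)|·(1+|ω₀²-ω²|/ω²) - |μ₀²V/(2(1+ω₀²V))| - |μ₀·U/(1+ω₀²V)|. -/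
/-!
With `A = 1 + ω²V` and `B = 1 + ω₀²V`, every `1/A` on the left-hand side is rewritten as
`(1/B) · (B/A)`, and the ratio `B/A` is at most both `1 + |ω₀² - ω²|/ω²` and `1 + ω₀²/ω²`.
This bounds each term separately: the logarithm through `log t ≤ t - 1`, the quadratic and the
linear term in `U` through the two ratio bounds; the remaining terms are dropped against their
absolute values, and `log (1 + ω²/ω₀²) ≥ 0` is pure slack.
-/

open Real

lemma one_add_mul_div_one_add_mul_le {a b c V : ℝ} (ha : 0 < a) (hc : 0 ≤ c) (hb : b ≤ a + c)
    (hV : 0 ≤ V) : (1 + b * V) / (1 + a * V) ≤ 1 + c / a := by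
  have hA : 0 < 1 + a * V := by positivity
  rw [div_le_iff₀ hA]
  have hexpand : (1 + c / a) * (1 + a * V) = 1 + a * V + c * V + c / a := by
    field_simp
    ring
  rw [hexpand]
  nlinarith [div_nonneg hc ha.le]

section RatioBounds

variable {x y k : ℝ}

lemma neg_le_log_div_of_div_le (hx : 0 < x) (hy : 0 < y) (hk : y / x ≤ 1 + k) :
    -k ≤ log (x / y) := by
  have hlog : log (y / x) ≤ y / x - 1 := log_le_sub_one_of_pos (div_pos hy hx)
  rw [← inv_div, log_inv]
  linarith

lemma neg_abs_mul_sq_div_le (d U : ℝ) (hx : 0 < x) (hy : 0 < y) (hk : y / x ≤ k) :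
    -(|d| * (U / y) ^ 2 * k) ≤ d * U ^ 2 / (x * y) := by
  have hsq : U ^ 2 / (x * y) = (U / y) ^ 2 * (y / x) := by
    field_simp
  have hle : U ^ 2 / (x * y) ≤ (U / y) ^ 2 * k := by
    rw [hsq]
    exact mul_le_mul_of_nonneg_left hk (sq_nonneg _)
  calc -(|d| * (U / y) ^ 2 * k) ≤ -(|d| * (U ^ 2 / (x * y))) := by
        rw [mul_assoc]
        exact neg_le_neg (mul_le_mul_of_nonneg_left hle (abs_nonneg d))
    _ ≤ d * (U ^ 2 / (x * y)) := by
        rw [← neg_mul]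
        exact mul_le_mul_of_nonneg_right (neg_abs_le d) (by positivity)
    _ = d * U ^ 2 / (x * y) := (mul_div_assoc _ _ _).symm

lemma mul_div_le_abs_mul_abs_div_mul (m U : ℝ) (hx : 0 < x) (hy : 0 < y) (hk : y / x ≤ k) :
    m * U / x ≤ |m| * |U / y| * k :=
  calc m * U / x ≤ |m * U / x| := le_abs_self _
    _ = |m| * |U / y| * (y / x) := by
        rw [abs_div, abs_mul, abs_of_pos hx, abs_div, abs_of_pos hy]
        field_simp
    _ ≤ |m| * |U / y| * k := mul_le_mul_of_nonneg_left hk (by positivity)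

end RatioBounds

/-- Lower bound on the log-likelihood ratio used to verify Wald-type conditions for
strong consistency of the MLE in the Gaussian random-effects SDE model. -/
theorem loglik_ratio_lower_bound
    (μ μ₀ ω2 ω02 U V : ℝ) (hω2 : 0 < ω2) (hω02 : 0 < ω02) (hV : 0 ≤ V) :
    (1/2) * Real.log ((1 + ω2 * V) / (1 + ω02 * V))
      + (1/2) * ((ω02 - ω2) * U ^ 2 / ((1 + ω2 * V) * (1 + ω02 * V)))
      + μ ^ 2 * V / (2 * (1 + ω2 * V)) - μ * U / (1 + ω2 * V)
      - μ₀ ^ 2 * V / (2 * (1 + ω02 * V)) + μ₀ * U / (1 + ω02 * V)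
    ≥ -(1/2) * (Real.log (1 + ω2 / ω02) + |ω2 - ω02| / ω2)
      - (1/2) * |ω02 - ω2| * (U / (1 + ω02 * V)) ^ 2 * (1 + ω02 / ω2)
      - |μ| * |U / (1 + ω02 * V)| * (1 + |ω02 - ω2| / ω2)
      - |μ₀ ^ 2 * V / (2 * (1 + ω02 * V))| - |μ₀ * U / (1 + ω02 * V)| := by
  have hA : 0 < 1 + ω2 * V := by positivity
  have hB : 0 < 1 + ω02 * V := by positivity
  have hratio_abs := one_add_mul_div_one_add_mul_le (b := ω02) hω2 (abs_nonneg (ω02 - ω2))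
    (by linarith [le_abs_self (ω02 - ω2)]) hV
  have hratio := one_add_mul_div_one_add_mul_le hω2 hω02.le (le_add_of_nonneg_left hω2.le) hV
  have hlog := neg_le_log_div_of_div_le hA hB hratio_abs
  have hlog_nonneg : 0 ≤ log (1 + ω2 / ω02) := log_nonneg (by linarith [div_pos hω2 hω02])
  have hquad := neg_abs_mul_sq_div_le (ω02 - ω2) U hA hB hratio
  have hlin := mul_div_le_abs_mul_abs_div_mul μ U hA hB hratio_abs
  have hμ_sq : 0 ≤ μ ^ 2 * V / (2 * (1 + ω2 * V)) := by positivity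
  rw [abs_sub_comm ω2 ω02]
  linarith [le_abs_self (μ₀ ^ 2 * V / (2 * (1 + ω02 * V))), neg_abs_le (μ₀ * U / (1 + ω02 * V))]
end

section
/- Let U ∈ ℝ, V ≥ 0, and θ₀ = (μ₀, ω₀²) with ω₀² > 0. Let Ω ⊆ [μ̲,μ̄] × [ω̲², ω̄²] with ω̲² > 0 be compact, and let S ⊆ Ω be any nonempty compact subset. Then sup over (μ,ω²) ∈ S of the log-likelihood ratio R(μ,ω²) (as in the Gaussian random-effects SDE model) is bounded above by c₀ + c₁·(U/(1+ω₀²V))² + c₂·|U/(1+ω₀²V)| + μ₀²/(2ω₀²) + |μ₀|·|U/(1+ω₀²V)|, where c₀ = sup_{S} (1/2)(log(1+ω²/ω₀²) + |ω²-ω₀²|/ω²), c₁ = sup_S (1/2)|ω₀²-ω²|(1+ω₀²/ω²), and c₂ = sup_S |μ|(1+|ω₀²-ω²|/ω²), all of which are finite. -/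
set_option maxHeartbeats 1000000 in
lemma key_pointwise (μ₀ ω02 U V m w : ℝ) (hω02 : 0 < ω02) (hV : 0 < V) (hw : 0 < w) :
    (-(1/2) * Real.log (1 + w*V) + -(V / (2*(1+w*V))) * (m - U/V)^2)
    - (-(1/2) * Real.log (1 + ω02*V) + -(V / (2*(1+ω02*V))) * (μ₀ - U/V)^2)
    ≤ (1/2)*(Real.log (1 + w/ω02) + |w - ω02| / w)
      + (1/2) * |ω02 - w| * (1 + ω02/w) * (U/(1+ω02*V))^2
      + |m| * (1 + |ω02 - w| / w) * |U/(1+ω02*V)|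
      + μ₀^2/(2*ω02) + |μ₀| * |U/(1+ω02*V)| := by
  have h1 : (0:ℝ) < 1 + w*V := by nlinarith
  have h0 : (0:ℝ) < 1 + ω02*V := by nlinarith
  set K := |ω02 - w| with hKdef
  have hK0 : 0 ≤ K := abs_nonneg _
  have hKω : ω02 - w ≤ K := le_abs_self _
  have hK' : |w - ω02| = K := abs_sub_comm w ω02
  set a := U/(1+ω02*V) with ha
  set b := U/(1+w*V) with hb
  -- log part
  have hlog : (1/2) * Real.log (1 + ω02*V) - (1/2) * Real.log (1 + w*V)
      ≤ (1/2)*(|w - ω02| / w) := by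
    have hd : Real.log ((1+ω02*V)/(1+w*V)) ≤ (1+ω02*V)/(1+w*V) - 1 :=
      Real.log_le_sub_one_of_pos (div_pos h0 h1)
    rw [Real.log_div h0.ne' h1.ne'] at hd
    have h2 : (1+ω02*V)/(1+w*V) - 1 ≤ |w - ω02| / w := by
      rw [hK', div_sub_one h1.ne', div_le_div_iff₀ h1 hw]
      nlinarith [mul_le_mul_of_nonneg_right hKω (mul_pos hV hw).le,
        mul_le_mul_of_nonneg_left (show V*w ≤ 1+w*V by nlinarith) hK0]
    linarith
  have hlognn : 0 ≤ Real.log (1 + w/ω02) :=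
    Real.log_nonneg (by nlinarith [div_pos hw hω02])
  -- quadratic identity
  have hquad : V/(2*(1+ω02*V)) * (μ₀ - U/V)^2 - V/(2*(1+w*V)) * (m - U/V)^2
      = (1/2)*(V/(1+ω02*V))*μ₀^2 - μ₀*a + (1/2)*((a - b)*(U/V))
        - (1/2)*(V/(1+w*V))*m^2 + m*b := by
    rw [ha, hb]; field_simp; ring
  -- T1
  have hT1 : (1/2)*(V/(1+ω02*V))*μ₀^2 ≤ μ₀^2/(2*ω02) := by
    have hle : V/(1+ω02*V) ≤ 1/ω02 := by
      rw [div_le_div_iff₀ h0 hω02]; nlinarith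
    have := mul_le_mul_of_nonneg_right hle (sq_nonneg μ₀)
    calc (1/2)*(V/(1+ω02*V))*μ₀^2 ≤ (1/2)*((1/ω02)*μ₀^2) := by nlinarith
      _ = μ₀^2/(2*ω02) := by ring
  -- T2
  have hT2 : -(μ₀*a) ≤ |μ₀| * |a| := by
    rw [← abs_mul]; exact neg_le_abs _
  -- T3
  have hX : w*(1+ω02*V) ≤ (w+ω02)*(1+w*V) := by
    nlinarith [mul_pos hw hV, mul_pos (mul_pos hw hw) hV]
  have hmain : (a - b)*(U/V) ≤ K*(1 + ω02/w) * a^2 := by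
    have e1 : (a - b)*(U/V) = U^2*(w-ω02)/((1+ω02*V)*(1+w*V)) := by
      rw [ha, hb]; field_simp; ring
    have e2 : K*(1 + ω02/w) * a^2 = K*(w+ω02)*U^2/(w*(1+ω02*V)^2) := by
      rw [ha]; field_simp; try ring
    rw [e1, e2, div_le_div_iff₀ (by positivity) (by positivity)]
    have hy : w - ω02 ≤ K := by rw [hKdef, abs_sub_comm]; exact le_abs_self _
    have hchain : (w - ω02)*(w*(1+ω02*V)) ≤ K*((w+ω02)*(1+w*V)) :=
      mul_le_mul hy hX (by positivity) hK0
    nlinarith [mul_le_mul_of_nonneg_left hchain (mul_nonneg (sq_nonneg U) h0.le)]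
  have hT3 : (1/2)*((a - b)*(U/V)) ≤ (1/2)*K*(1 + ω02/w) * a^2 := by nlinarith
  -- T4
  have hT4 : -((1/2)*(V/(1+w*V))*m^2) ≤ 0 := by
    have : 0 ≤ (1/2)*(V/(1+w*V))*m^2 := by positivity
    linarith
  -- T5
  have hT5 : m*b ≤ |m| * (1 + K/w) * |a| := by
    have h5 : |b| ≤ (1 + K/w) * |a| := by
      rw [ha, hb, abs_div, abs_div, abs_of_pos h1, abs_of_pos h0]
      have e : (1 + K/w) * (|U|/(1+ω02*V)) = (w+K)*|U|/(w*(1+ω02*V)) := by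
        field_simp; try ring
      rw [e, div_le_div_iff₀ h1 (by positivity)]
      have hww : w*(1+ω02*V) ≤ (w+K)*(1+w*V) := by
        nlinarith [mul_pos hw hV, mul_le_mul_of_nonneg_right hKω (mul_pos hw hV).le,
          mul_nonneg hK0 (mul_pos hw hV).le]
      nlinarith [mul_le_mul_of_nonneg_left hww (abs_nonneg U)]
    calc m*b ≤ |m * b| := le_abs_self _
      _ = |m| * |b| := abs_mul _ _
      _ ≤ |m| * ((1 + K/w) * |a|) := mul_le_mul_of_nonneg_left h5 (abs_nonneg m)
      _ = |m| * (1 + K/w) * |a| := by ring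
  nlinarith [hlog, hT1, hT2, hT3, hT4, hT5, hquad, hlognn]

set_option maxHeartbeats 1000000


open Set

/-- Uniform upper bound, over a nonempty compact subset S of the parameter space Ω,
for the log-likelihood ratio R(μ,ω²) = log(λ(μ,ω²)/λ(μ₀,ω₀²)) in the Gaussian
random-effects SDE model, in terms of finite suprema c₀, c₁, c₂ over S. -/
theorem sup_loglik_ratio_upper_bound
    (μlo μhi ω2lo ω2hi : ℝ) (hω2lo : 0 < ω2lo)
    (Ω : Set (ℝ × ℝ)) (hΩc : IsCompact Ω) (hΩsub : Ω ⊆ Icc μlo μhi ×ˢ Icc ω2lo ω2hi)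
    (S : Set (ℝ × ℝ)) (hS : S ⊆ Ω) (hSc : IsCompact S) (hSne : S.Nonempty)
    (μ₀ ω02 : ℝ) (hθ₀ : (μ₀, ω02) ∈ Ω) (hω02 : 0 < ω02)
    (U V : ℝ) (hV : 0 < V)
    (lam : ℝ → ℝ → ℝ)
    (hlam : ∀ m w, lam m w =
      (1 + w * V) ^ (-(1/2 : ℝ)) *
        Real.exp (-(V / (2 * (1 + w * V))) * (m - U / V) ^ 2) *
        Real.exp (U ^ 2 / (2 * V)))
    (R : ℝ → ℝ → ℝ) (hR : ∀ m w, R m w = Real.log (lam m w / lam μ₀ ω02))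
    (c₀ c₁ c₂ : ℝ)
    (hc₀ : c₀ = sSup ((fun p : ℝ × ℝ =>
      (1/2) * (Real.log (1 + p.2 / ω02) + |p.2 - ω02| / p.2)) '' S))
    (hc₁ : c₁ = sSup ((fun p : ℝ × ℝ =>
      (1/2) * |ω02 - p.2| * (1 + ω02 / p.2)) '' S))
    (hc₂ : c₂ = sSup ((fun p : ℝ × ℝ =>
      |p.1| * (1 + |ω02 - p.2| / p.2)) '' S)) :
    BddAbove ((fun p : ℝ × ℝ =>
        (1/2) * (Real.log (1 + p.2 / ω02) + |p.2 - ω02| / p.2)) '' S) ∧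
    BddAbove ((fun p : ℝ × ℝ => (1/2) * |ω02 - p.2| * (1 + ω02 / p.2)) '' S) ∧
    BddAbove ((fun p : ℝ × ℝ => |p.1| * (1 + |ω02 - p.2| / p.2)) '' S) ∧
    sSup ((fun p : ℝ × ℝ => R p.1 p.2) '' S) ≤
      c₀ + c₁ * (U / (1 + ω02 * V)) ^ 2 + c₂ * |U / (1 + ω02 * V)|
        + μ₀ ^ 2 / (2 * ω02) + |μ₀| * |U / (1 + ω02 * V)| := by
  -- bounds on S coordinates
  have hmem : ∀ p ∈ S, (μlo ≤ p.1 ∧ p.1 ≤ μhi) ∧ (ω2lo ≤ p.2 ∧ p.2 ≤ ω2hi) := by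
    intro p hp
    have h := hΩsub (hS hp)
    exact ⟨⟨h.1.1, h.1.2⟩, ⟨h.2.1, h.2.2⟩⟩
  have hwpos : ∀ p ∈ S, 0 < p.2 := fun p hp => lt_of_lt_of_le hω2lo (hmem p hp).2.1
  have hω2hi : ω2lo ≤ ω2hi := by
    obtain ⟨p, hp⟩ := hSne
    exact le_trans (hmem p hp).2.1 (hmem p hp).2.2
  -- BddAbove for the three families
  have habs2 : ∀ p ∈ S, |p.2 - ω02| ≤ ω2hi + ω02 := by
    intro p hp
    have h1 := (hmem p hp).2.2
    have h2 := hwpos p hp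
    rw [abs_sub_le_iff]; constructor <;> nlinarith
  have habs2' : ∀ p ∈ S, |ω02 - p.2| ≤ ω2hi + ω02 := by
    intro p hp; rw [abs_sub_comm]; exact habs2 p hp
  have b₀ : BddAbove ((fun p : ℝ × ℝ =>
      (1/2) * (Real.log (1 + p.2 / ω02) + |p.2 - ω02| / p.2)) '' S) := by
    refine ⟨(1/2) * (Real.log (1 + ω2hi / ω02) + (ω2hi + ω02) / ω2lo), ?_⟩
    rintro x ⟨p, hp, rfl⟩
    have hw := hwpos p hp
    have hlog : Real.log (1 + p.2 / ω02) ≤ Real.log (1 + ω2hi / ω02) := by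
      have hle : p.2 / ω02 ≤ ω2hi / ω02 :=
        div_le_div₀ (by linarith) ((hmem p hp).2.2) hω02 le_rfl
      exact Real.log_le_log (by positivity) (by linarith)
    have hdiv : |p.2 - ω02| / p.2 ≤ (ω2hi + ω02) / ω2lo :=
      div_le_div₀ (by linarith) (habs2 p hp) hω2lo ((hmem p hp).2.1)
    simp only
    linarith
  have b₁ : BddAbove ((fun p : ℝ × ℝ =>
      (1/2) * |ω02 - p.2| * (1 + ω02 / p.2)) '' S) := by
    refine ⟨(1/2) * (ω2hi + ω02) * (1 + ω02 / ω2lo), ?_⟩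
    rintro x ⟨p, hp, rfl⟩
    have hw := hwpos p hp
    have h1 : ω02 / p.2 ≤ ω02 / ω2lo :=
      div_le_div₀ hω02.le le_rfl hω2lo ((hmem p hp).2.1)
    have h3 : (0:ℝ) ≤ 1 + ω02 / p.2 := by positivity
    have hm := mul_le_mul (habs2' p hp)
      (show 1 + ω02 / p.2 ≤ 1 + ω02 / ω2lo by linarith) h3 (by linarith)
    simp only
    linarith
  have b₂ : BddAbove ((fun p : ℝ × ℝ =>
      |p.1| * (1 + |ω02 - p.2| / p.2)) '' S) := by
    refine ⟨(|μlo| + |μhi|) * (1 + (ω2hi + ω02) / ω2lo), ?_⟩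
    rintro x ⟨p, hp, rfl⟩
    have hw := hwpos p hp
    have h1 : |p.1| ≤ |μlo| + |μhi| := by
      have h := (hmem p hp).1
      rw [abs_le]
      constructor
      · linarith [neg_abs_le μlo, abs_nonneg μhi, h.1]
      · linarith [le_abs_self μhi, abs_nonneg μlo, h.2]
    have h2 : |ω02 - p.2| / p.2 ≤ (ω2hi + ω02) / ω2lo :=
      div_le_div₀ (by linarith) (habs2' p hp) hω2lo ((hmem p hp).2.1)
    have h3 : (0:ℝ) ≤ 1 + |ω02 - p.2| / p.2 := by positivity
    have hm := mul_le_mul h1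
      (show 1 + |ω02 - p.2| / p.2 ≤ 1 + (ω2hi + ω02) / ω2lo by linarith) h3
      (by positivity)
    simp only
    linarith
  refine ⟨b₀, b₁, b₂, ?_⟩
  -- log of lam
  have hloglam : ∀ m w : ℝ, 0 < w → Real.log (lam m w) =
      -(1/2) * Real.log (1 + w*V) + -(V / (2*(1+w*V))) * (m - U/V)^2 + U^2/(2*V) := by
    intro m w hw
    have h1 : (0:ℝ) < 1 + w*V := by nlinarith
    rw [hlam, Real.log_mul (by positivity) (Real.exp_ne_zero _),
      Real.log_mul (by positivity) (Real.exp_ne_zero _),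
      Real.log_rpow h1, Real.log_exp, Real.log_exp]
    try ring
  have hlampos : ∀ m w : ℝ, 0 < w → 0 < lam m w := by
    intro m w hw
    have h1 : (0:ℝ) < 1 + w*V := by nlinarith
    rw [hlam]; positivity
  -- final sup bound
  apply csSup_le (hSne.image _)
  rintro x ⟨p, hp, rfl⟩
  obtain ⟨m, w⟩ := p
  have hw : 0 < w := hwpos (m, w) hp
  have hRval : R m w = (-(1/2) * Real.log (1 + w*V) + -(V / (2*(1+w*V))) * (m - U/V)^2)
      - (-(1/2) * Real.log (1 + ω02*V) + -(V / (2*(1+ω02*V))) * (μ₀ - U/V)^2) := by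
    rw [hR, Real.log_div (hlampos m w hw).ne' (hlampos μ₀ ω02 hω02).ne',
      hloglam m w hw, hloglam μ₀ ω02 hω02]
    ring
  have hkey := key_pointwise μ₀ ω02 U V m w hω02 hV hw
  rw [← hRval] at hkey
  -- suprema dominate pointwise values
  have hf₀ : (1/2) * (Real.log (1 + w / ω02) + |w - ω02| / w) ≤ c₀ := by
    rw [hc₀]; exact le_csSup b₀ (mem_image_of_mem _ hp)
  have hf₁ : (1/2) * |ω02 - w| * (1 + ω02 / w) ≤ c₁ := by
    rw [hc₁]; exact le_csSup b₁ (mem_image_of_mem _ hp)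
  have hf₂ : |m| * (1 + |ω02 - w| / w) ≤ c₂ := by
    rw [hc₂]; exact le_csSup b₂ (mem_image_of_mem _ hp)
  have h1 := mul_le_mul_of_nonneg_right hf₁ (sq_nonneg (U / (1 + ω02*V)))
  have h2 := mul_le_mul_of_nonneg_right hf₂ (abs_nonneg (U / (1 + ω02*V)))
  simp only
  nlinarith [hkey, h1, h2, hf₀]
end
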